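/- β(30) ≤ 8; that is, there exists a finite simple graph with 8 edges having exactly 30 spanning trees. -/

import Mathlib

open SimpleGraph

/-- The number of spanning trees of a simple graph `G`: the number of spanning
subgraphs of `G` that are trees. -/
noncomputable def numSpanningTrees {V : Type*} (G : SimpleGraph V) : ℕ :=
  Nat.card {H : G.Subgraph // H.IsSpanning ∧ H.coe.IsTree}

/-- `graphBeta n` is the least number `k` for which there exists a finite simple graph
with `k` edges having precisely `n` spanning trees. -/
noncomputable def graphBeta (n : ℕ) : ℕ :=
  sInf {k | ∃ (m : ℕ) (G : SimpleGraph (Fin m)),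
    Nat.card G.edgeSet = k ∧ numSpanningTrees G = n}


/-! ### Generic graph theory lemmas -/

lemma isAcyclic_of_iso {V W : Type*} {G : SimpleGraph V} {H : SimpleGraph W}
    (e : G ≃g H) (h : G.IsAcyclic) : H.IsAcyclic := by
  intro v c hc
  exact h (c.map e.symm.toHom) (hc.map e.symm.injective)

lemma isTree_of_iso {V W : Type*} {G : SimpleGraph V} {H : SimpleGraph W}
    (e : G ≃g H) (h : G.IsTree) : H.IsTree := by
  rw [isTree_iff] at h ⊢
  exact ⟨e.connected_iff.mp h.1, isAcyclic_of_iso e h.2⟩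

lemma card_le_of_connected {V : Type*} [Fintype V] {G : SimpleGraph V} [Fintype G.edgeSet]
    (h : G.Connected) : Fintype.card V ≤ G.edgeFinset.card + 1 := by
  classical
  obtain ⟨r⟩ := h.nonempty
  have key : ∀ v : V, ∃ u, v ≠ r → G.Adj u v ∧ G.dist r u < G.dist r v := by
    intro v
    by_cases hv : v = r
    · exact ⟨v, fun h' => absurd hv h'⟩
    · have hpos : 0 < G.dist r v := h.pos_dist_of_ne (Ne.symm hv)
      obtain ⟨p, hp⟩ := (h.preconnected v r).exists_walk_length_eq_dist
      obtain ⟨u, hadj, q, rfl⟩ := Walk.exists_eq_cons_of_ne hv p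
      refine ⟨u, fun _ => ⟨hadj.symm, ?_⟩⟩
      have h1 : G.dist r u ≤ q.length := by
        rw [dist_comm]; exact dist_le q
      have h2 : q.length + 1 = G.dist r v := by
        rw [dist_comm]; simpa [Walk.length_cons] using hp
      omega
  choose u hu using key
  have hcle : (Finset.univ.erase r).card ≤ G.edgeFinset.card := by
    refine Finset.card_le_card_of_injOn (fun v => s(u v, v)) ?_ ?_
    · intro v hv
      rw [Finset.mem_coe, Finset.mem_erase] at hv
      exact mem_edgeFinset.mpr ((hu v hv.1).1)
    · intro a ha b hb hab
      rw [Finset.coe_erase, Set.mem_diff] at ha hb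
      simp only [Finset.mem_coe, Finset.coe_univ, Set.mem_singleton_iff] at ha hb
      simp only [Sym2.eq_iff] at hab
      rcases hab with ⟨-, rfl⟩ | ⟨h1, h2⟩
      · rfl
      · have da := (hu a ha.2).2
        have db := (hu b hb.2).2
        rw [h1] at da; rw [← h2] at db
        omega
  have : (Finset.univ.erase r).card = Fintype.card V - 1 := by
    rw [Finset.card_erase_of_mem (Finset.mem_univ r), Finset.card_univ]
  have hp : 0 < Fintype.card V := Fintype.card_pos_iff.mpr ⟨r⟩
  omega

lemma connected_delete {V : Type*} {G : SimpleGraph V} {x y : V} (hc : G.Connected)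
    (hr : (G \ fromEdgeSet {s(x,y)}).Reachable x y) :
    (G \ fromEdgeSet {s(x,y)}).Connected := by
  rw [connected_iff] at hc ⊢
  refine ⟨fun a b => ?_, hc.2⟩
  obtain ⟨p⟩ := hc.1 a b
  induction p with
  | nil => exact Reachable.refl _
  | @cons a c b h q ih =>
    refine Reachable.trans ?_ ih
    by_cases h1 : s(a, c) = s(x, y)
    · rw [Sym2.eq_iff] at h1
      rcases h1 with ⟨rfl, rfl⟩ | ⟨rfl, rfl⟩
      · exact hr
      · exact hr.symm
    · refine Adj.reachable ?_
      rw [sdiff_adj]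
      exact ⟨h, fun hbad => h1 (fromEdgeSet_adj _ |>.mp hbad).1⟩

lemma isTree_of_connected_of_card {V : Type*} [Fintype V] {G : SimpleGraph V}
    [Fintype G.edgeSet] (hc : G.Connected) (he : G.edgeFinset.card + 1 = Fintype.card V) :
    G.IsTree := by
  classical
  rw [isTree_iff]
  refine ⟨hc, ?_⟩
  by_contra hac
  simp only [IsAcyclic, not_forall, not_not] at hac
  obtain ⟨v, c, hcyc⟩ := hac
  have hne : c.edges ≠ [] := by
    have h3 := hcyc.three_le_length
    intro hnil
    have := Walk.length_edges c
    rw [hnil] at this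
    simp at this
    omega
  obtain ⟨e, he'⟩ := List.exists_mem_of_ne_nil _ hne
  induction e using Sym2.ind with
  | _ x y =>
  have hxy : G.Adj x y ∧ (G \ fromEdgeSet {s(x,y)}).Reachable x y :=
    (adj_and_reachable_delete_edges_iff_exists_cycle).mpr ⟨v, c, hcyc, he'⟩
  have hc' := connected_delete hc hxy.2
  have hEF : (G \ fromEdgeSet {s(x,y)}).edgeFinset = G.edgeFinset.erase s(x, y) := by
    ext e
    simp only [mem_edgeFinset, Finset.mem_erase, edgeSet_sdiff, edgeSet_fromEdgeSet,
      Set.mem_diff, Set.mem_singleton_iff, Set.mem_setOf_eq]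
    constructor
    · rintro ⟨h1, h2⟩
      refine ⟨fun hbad => h2 ⟨hbad, ?_⟩, h1⟩
      rw [hbad]
      simp [hxy.1.ne]
    · rintro ⟨h1, h2⟩
      exact ⟨h2, fun hbad => h1 hbad.1⟩
  have hmem : s(x, y) ∈ G.edgeFinset := mem_edgeFinset.mpr hxy.1
  have hcard : (G \ fromEdgeSet {s(x,y)}).edgeFinset.card = G.edgeFinset.card - 1 := by
    rw [hEF, Finset.card_erase_of_mem hmem]
  have hle := card_le_of_connected hc'
  have hpos : 0 < G.edgeFinset.card := Finset.card_pos.mpr ⟨_, hmem⟩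
  omega


set_option maxRecDepth 4000

/-! ### The concrete graph -/

def ep : Fin 8 → Fin 6 × Fin 6 := ![(0,1),(0,2),(0,3),(0,4),(1,2),(1,5),(3,4),(3,5)]

def adjB (f : Fin 8 → Bool) (a b : Fin 6) : Bool :=
  (List.finRange 8).any fun i =>
    f i && ((a == (ep i).1 && b == (ep i).2) || (a == (ep i).2 && b == (ep i).1))

lemma adjB_symm : ∀ f a b, adjB f a b = adjB f b a := by decide

lemma adjB_loopless : ∀ f a, adjB f a a = false := by decide

lemma adjB_le : ∀ f a b, adjB f a b = true → adjB (fun _ => true) a b = true := by decide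

lemma f_eq_adjB : ∀ (f : Fin 8 → Bool) i, f i = adjB f (ep i).1 (ep i).2 := by decide

def graphOf (f : Fin 8 → Bool) : SimpleGraph (Fin 6) where
  Adj a b := adjB f a b = true
  symm := ⟨fun a b h => by
    show adjB f b a = true
    rw [adjB_symm f b a]; exact h⟩
  loopless := ⟨fun a h => by simp only [adjB_loopless] at h; exact Bool.false_ne_true h⟩

instance (f : Fin 8 → Bool) : DecidableRel (graphOf f).Adj :=
  fun _ _ => inferInstanceAs (Decidable (_ = true))

lemma adjB_iff (f : Fin 8 → Bool) (a b : Fin 6) : adjB f a b = true ↔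
    ∃ i, f i = true ∧ ((a = (ep i).1 ∧ b = (ep i).2) ∨ (a = (ep i).2 ∧ b = (ep i).1)) := by
  simp [adjB, List.any_eq_true, List.mem_finRange, Bool.and_eq_true, Bool.or_eq_true,
    beq_iff_eq]

/-! ### Fast connectivity -/

def stepB (f : Fin 8 → Bool) (S : Fin 6 → Bool) : Fin 6 → Bool :=
  fun v => S v || (List.finRange 6).any fun u => S u && adjB f u v

def initB : Fin 6 → Bool := fun v => v == 0

def iterB (f : Fin 8 → Bool) (k : ℕ) : Fin 6 → Bool := (stepB f)^[k] initB

def reachB (f : Fin 8 → Bool) : Fin 6 → Bool := iterB f 5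

lemma iterB_succ (f k v) : iterB f (k+1) v = stepB f (iterB f k) v := by
  rw [iterB, Function.iterate_succ_apply']; rfl

lemma iterB_mono (f k v) (h : iterB f k v = true) : iterB f (k+1) v = true := by
  rw [iterB_succ, stepB, h]; rfl

lemma iterB_mono_le (f) {k m : ℕ} (hkm : k ≤ m) (v) (h : iterB f k v = true) :
    iterB f m v = true := by
  induction m with
  | zero =>
    have hk0 : k = 0 := by omega
    subst hk0; exact h
  | succ n ih =>
    by_cases hk : k = n + 1
    · subst hk; exact h
    · exact iterB_mono f n v (ih (by omega))

lemma iterB_sound (f : Fin 8 → Bool) : ∀ k v, iterB f k v = true → (graphOf f).Reachable 0 v := by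
  intro k
  induction k with
  | zero =>
    intro v h
    have : v = 0 := by simpa [iterB, initB] using h
    subst this; rfl
  | succ n ih =>
    intro v h
    rw [iterB_succ, stepB] at h
    rw [Bool.or_eq_true] at h
    rcases h with h1 | h2
    · exact ih v h1
    · obtain ⟨u, -, hu⟩ := List.any_eq_true.mp h2
      rw [Bool.and_eq_true] at hu
      exact (ih u hu.1).trans (Adj.reachable hu.2)

lemma iterB_walk (f : Fin 8 → Bool) : ∀ (u v : Fin 6) (p : (graphOf f).Walk u v) (k : ℕ),
    iterB f k u = true → iterB f (k + p.length) v = true := by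
  intro u v p
  induction p with
  | nil => intro k h; simpa using h
  | @cons a c b h q ih =>
    intro k hk
    have hb : iterB f (k+1) c = true := by
      rw [iterB_succ, stepB]
      rw [Bool.or_eq_true]
      refine Or.inr (List.any_eq_true.mpr ⟨a, List.mem_finRange a, ?_⟩)
      rw [Bool.and_eq_true]
      exact ⟨hk, h⟩
    have := ih (k+1) hb
    have heq : k + 1 + q.length = k + (Walk.cons h q).length := by
      rw [Walk.length_cons]; omega
    rwa [heq] at this

lemma reachB_complete (f : Fin 8 → Bool) (v : Fin 6) (h : (graphOf f).Reachable 0 v) :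
    reachB f v = true := by
  refine h.elim_path fun p => ?_
  have hlen : p.val.length ≤ 5 := by
    have := p.property.length_lt
    simpa using Nat.lt_succ_iff.mp (by simpa using this)
  have h0 : iterB f 0 0 = true := by simp [iterB, initB]
  have := iterB_walk f 0 v p.val 0 h0
  rw [Nat.zero_add] at this
  exact iterB_mono_le f hlen v this

lemma connected_iff_reachB (f : Fin 8 → Bool) :
    (graphOf f).Connected ↔ ∀ v, reachB f v = true := by
  constructor
  · intro h v
    exact reachB_complete f v (h.preconnected 0 v)
  · intro h
    rw [connected_iff]
    exact ⟨fun a b => ((iterB_sound f 5 a (h a)).symm).trans (iterB_sound f 5 b (h b)),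
      ⟨0⟩⟩

/-! ### Edge counting -/

def cB (f : Fin 8 → Bool) : ℕ := (Finset.univ.filter (fun i => f i = true)).card

lemma edgeFinset_card_eq : ∀ f : Fin 8 → Bool, (graphOf f).edgeFinset.card = cB f := by decide


def PB (f : Fin 8 → Bool) : Prop := cB f = 5 ∧ ∀ v, reachB f v = true

instance : DecidablePred PB := fun _ => inferInstanceAs (Decidable (_ ∧ _))

lemma PB_iff (f : Fin 8 → Bool) : PB f ↔ (graphOf f).IsTree := by
  constructor
  · rintro ⟨h5, hr⟩
    refine isTree_of_connected_of_card ((connected_iff_reachB f).mpr hr) ?_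
    rw [edgeFinset_card_eq, h5]
    simp
  · intro ht
    constructor
    · have := ht.card_edgeFinset
      rw [edgeFinset_card_eq] at this
      simpa using this
    · exact (connected_iff_reachB f).mp ht.isConnected

def G0 : SimpleGraph (Fin 6) := graphOf (fun _ => true)

instance : DecidableRel G0.Adj :=
  inferInstanceAs (DecidableRel (graphOf (fun _ => true)).Adj)

lemma graphOf_le (f : Fin 8 → Bool) : graphOf f ≤ G0 := fun a b h => adjB_le f a b h

noncomputable def Phi (f : {f : Fin 8 → Bool // (graphOf f).IsTree}) :
    {H : G0.Subgraph // H.IsSpanning ∧ H.coe.IsTree} :=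
  ⟨SimpleGraph.toSubgraph (graphOf f.1) (graphOf_le f.1),
    SimpleGraph.toSubgraph.isSpanning _ _,
    isTree_of_iso
      (Subgraph.spanningCoeEquivCoeOfSpanning _ (SimpleGraph.toSubgraph.isSpanning _ _)) f.2⟩

lemma Phi_bij : Function.Bijective Phi := by
  constructor
  · rintro ⟨f1, h1⟩ ⟨f2, h2⟩ h
    have hAdj : (graphOf f1).Adj = (graphOf f2).Adj :=
      congrArg SimpleGraph.Subgraph.Adj (congrArg Subtype.val h)
    have hb : ∀ a b, adjB f1 a b = adjB f2 a b := by
      intro a b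
      have := congrFun (congrFun hAdj a) b
      simp only [graphOf, eq_iff_iff] at this
      cases hx : adjB f1 a b <;> cases hy : adjB f2 a b <;> simp_all
    refine Subtype.ext (funext fun i => ?_)
    show f1 i = f2 i
    rw [f_eq_adjB f1 i, f_eq_adjB f2 i, hb]
  · rintro ⟨H, hsp, ht⟩
    classical
    set f : Fin 8 → Bool := fun i => decide (H.Adj (ep i).1 (ep i).2) with hf
    have key : graphOf f = H.spanningCoe := by
      ext a b
      show adjB f a b = true ↔ H.Adj a b
      rw [adjB_iff]
      constructor
      · rintro ⟨i, hfi, hpat⟩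
        rw [hf] at hfi
        simp only [decide_eq_true_eq] at hfi
        rcases hpat with ⟨rfl, rfl⟩ | ⟨rfl, rfl⟩
        · exact hfi
        · exact hfi.symm
      · intro hab
        have hG0 : G0.Adj a b := H.adj_sub hab
        have : adjB (fun _ => true) a b = true := hG0
        rw [adjB_iff] at this
        obtain ⟨i, -, hpat⟩ := this
        refine ⟨i, ?_, hpat⟩
        rw [hf]
        simp only [decide_eq_true_eq]
        rcases hpat with ⟨rfl, rfl⟩ | ⟨rfl, rfl⟩
        · exact hab
        · exact hab.symm
    have htree : (graphOf f).IsTree := by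
      rw [key]
      exact isTree_of_iso (Subgraph.spanningCoeEquivCoeOfSpanning H hsp).symm ht
    refine ⟨⟨f, htree⟩, ?_⟩
    refine Subtype.ext (SimpleGraph.Subgraph.ext ?_ ?_)
    · exact (hsp.verts_eq_univ).symm
    · show (graphOf f).Adj = H.Adj
      rw [key]
      rfl

theorem numSpanningTrees_G0 : numSpanningTrees G0 = 30 := by
  rw [numSpanningTrees, ← Nat.card_eq_of_bijective Phi Phi_bij]
  rw [Nat.card_congr (Equiv.subtypeEquivRight (fun f => (PB_iff f).symm))]
  rw [Nat.card_eq_fintype_card]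
  decide

theorem card_edgeSet_G0 : Nat.card G0.edgeSet = 8 := by
  rw [Nat.card_eq_fintype_card, ← SimpleGraph.edgeFinset_card]
  show (graphOf (fun _ => true)).edgeFinset.card = 8
  rw [edgeFinset_card_eq]
  decide


theorem stmt_11 :
    graphBeta 30 ≤ 8 ∧
    (∃ (V : Type) (_ : Fintype V) (G : SimpleGraph V),
      Nat.card G.edgeSet = 8 ∧ numSpanningTrees G = 30) := by
  constructor
  · exact Nat.sInf_le ⟨6, G0, card_edgeSet_G0, numSpanningTrees_G0⟩
  · exact ⟨Fin 6, inferInstance, G0, card_edgeSet_G0, numSpanningTrees_G0⟩
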